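/- Let α₁, ..., α_R ∈ ℝ/ℤ be (1/N)-separated (i.e. ‖α_i − α_j‖ ≥ 1/N for i ≠ j), and let S ⊆ {1, ..., N}. If |1̂_S(α_i)| ≥ ε|S| for each i, and E(S) ≤ (2 + η)|S|² with η ≤ 1, then R ≪ N / (ε⁴|S|²), i.e. R ≤ C N/(ε⁴ |S|²) for an absolute constant C. In particular, if |S| ≥ δN^{1/2} then R ≪ δ⁻²ε⁻⁴. -/

import Mathlib

/-!
Gallagher's form of the large sieve: for a `1`-periodic `C¹` function `F` and points that are
`δ`-separated modulo `1`, `∑ ‖F (αᵢ)‖ ≪ δ⁻¹ ∫₀¹ ‖F‖ + ∫₀¹ ‖F'‖`, since `‖F‖` at a point is at most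
its average over the next interval of length `δ` plus the variation of `F` there.
We apply it to `F = P²`, where `P(α) = |1̂_S(α)|² = ∑_{a, b ∈ S} e((a - b)α)`. By Parseval
`∫₀¹ |P|² = E(S)`, and `∫₀¹ |P'|² ≤ (2πN)² E(S)` since the frequencies are at most `N`,
so `∑ᵢ |1̂_S(αᵢ)|⁴ ≪ N E(S) ≪ N |S|²`, while each term is at least `ε⁴ |S|⁴`.
-/

open Finset Function Complex MeasureTheory
open scoped Real ComplexConjugate

noncomputable section

def trigPoly {ι : Type*} (T : Finset ι) (m : ι → ℤ) (w : ι → ℂ) (x : ℝ) : ℂ :=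
  ∑ i ∈ T, w i * exp (2 * π * I * m i * x)

section TrigPoly

variable {ι : Type*} (T : Finset ι) (m : ι → ℤ) (w : ι → ℂ)

theorem integral_exp_two_pi_I_mul (k : ℤ) :
    ∫ x in (0 : ℝ)..1, exp (2 * π * I * k * x) = if k = 0 then 1 else 0 := by
  split_ifs with hk
  · simp [hk]
  · have hc : 2 * π * I * k ≠ 0 := by simp [Real.pi_ne_zero, I_ne_zero, hk]
    rw [integral_exp_mul_complex hc, ofReal_one, mul_one, ofReal_zero, mul_zero, exp_zero,
      show 2 * π * I * k = k * (2 * π * I) by ring, exp_int_mul_two_pi_mul_I, sub_self, zero_div]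

theorem hasDerivAt_trigPoly (x : ℝ) :
    HasDerivAt (trigPoly T m w) (trigPoly T m (fun i => 2 * π * I * m i * w i) x) x := by
  unfold trigPoly
  refine HasDerivAt.fun_sum fun i _ => ?_
  exact ((((hasDerivAt_id' (x : ℂ)).const_mul (2 * π * I * m i)).cexp.comp_ofReal).const_mul
    (w i)).congr_deriv (by ring)

theorem differentiable_trigPoly : Differentiable ℝ (trigPoly T m w) :=
  fun x => (hasDerivAt_trigPoly T m w x).differentiableAt

theorem trigPoly_periodic : Periodic (trigPoly T m w) 1 := fun x => by
  refine sum_congr rfl fun i _ => ?_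
  rw [ofReal_add, ofReal_one, mul_add, exp_add, mul_one,
    show 2 * π * I * m i = m i * (2 * π * I) by ring, exp_int_mul_two_pi_mul_I, mul_one]

theorem mul_conj_trigPoly (x : ℝ) :
    trigPoly T m w x * conj (trigPoly T m w x) =
      ∑ p ∈ T ×ˢ T, w p.1 * conj (w p.2) * exp (2 * π * I * (m p.1 - m p.2 : ℤ) * x) := by
  rw [trigPoly, map_sum, sum_mul_sum, sum_product]
  refine sum_congr rfl fun i _ => sum_congr rfl fun j _ => ?_
  rw [map_mul, ← exp_conj, mul_mul_mul_comm, ← exp_add]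
  simp only [map_mul, conj_ofReal, conj_I, map_intCast, map_ofNat]
  push_cast
  ring_nf

theorem integral_norm_sq_trigPoly :
    ((∫ x in (0 : ℝ)..1, ‖trigPoly T m w x‖ ^ 2 : ℝ) : ℂ) =
      ∑ p ∈ T ×ˢ T with m p.1 = m p.2, w p.1 * conj (w p.2) := by
  have hint : ∀ p ∈ T ×ˢ T, IntervalIntegrable
      (fun x : ℝ => w p.1 * conj (w p.2) * exp (2 * π * I * (m p.1 - m p.2 : ℤ) * x))
      MeasureTheory.volume 0 1 := fun p _ => (by fun_prop : Continuous _).intervalIntegrable _ _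
  simp_rw [← intervalIntegral.integral_ofReal, ofReal_pow, ← mul_conj', mul_conj_trigPoly,
    intervalIntegral.integral_finsetSum hint, intervalIntegral.integral_const_mul,
    integral_exp_two_pi_I_mul, sum_filter, sub_eq_zero]
  exact sum_congr rfl fun p _ => by split_ifs <;> simp

theorem integral_norm_sq_trigPoly_le {B : ℝ} (hw : ∀ i ∈ T, ‖w i‖ ≤ B) :
    ∫ x in (0 : ℝ)..1, ‖trigPoly T m w x‖ ^ 2 ≤ B ^ 2 * #{p ∈ T ×ˢ T | m p.1 = m p.2} := by
  have hnonneg : 0 ≤ ∫ x in (0 : ℝ)..1, ‖trigPoly T m w x‖ ^ 2 :=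
    intervalIntegral.integral_nonneg zero_le_one fun _ _ => by positivity
  calc ∫ x in (0 : ℝ)..1, ‖trigPoly T m w x‖ ^ 2
      = ‖∑ p ∈ T ×ˢ T with m p.1 = m p.2, w p.1 * conj (w p.2)‖ := by
        rw [← integral_norm_sq_trigPoly, norm_real, Real.norm_of_nonneg hnonneg]
    _ ≤ ∑ p ∈ T ×ˢ T with m p.1 = m p.2, B ^ 2 := by
        refine norm_sum_le_of_le _ fun p hp => ?_
        simp only [mem_filter, mem_product] at hp
        rw [norm_mul, RCLike.norm_conj, sq]
        exact mul_le_mul (hw _ hp.1.1) (hw _ hp.1.2) (norm_nonneg _)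
          ((norm_nonneg _).trans (hw _ hp.1.1))
    _ = B ^ 2 * #{p ∈ T ×ˢ T | m p.1 = m p.2} := by rw [sum_const, nsmul_eq_mul, mul_comm]

end TrigPoly

theorem sum_intervalIntegral_le_of_pairwise_disjoint {ι : Type*} {f : ℝ → ℝ} {a b δ : ℝ}
    (hab : a ≤ b) (hf : IntegrableOn f (Set.Ioc a b)) (hf0 : ∀ x, 0 ≤ f x) (hδ : 0 ≤ δ)
    (s : Finset ι) (c : ι → ℝ) (hsub : ∀ i ∈ s, Set.Ioc (c i) (c i + δ) ⊆ Set.Ioc a b)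
    (hdisj : Set.Pairwise s (Disjoint on fun i => Set.Ioc (c i) (c i + δ))) :
    ∑ i ∈ s, ∫ y in c i..c i + δ, f y ≤ ∫ y in a..b, f y := by
  simp_rw [intervalIntegral.integral_of_le (le_add_of_nonneg_right hδ),
    intervalIntegral.integral_of_le hab]
  rw [← integral_biUnion_finset s (fun _ _ => measurableSet_Ioc) hdisj
    fun i hi => hf.mono_set (hsub i hi)]
  exact setIntegral_mono_set hf (Filter.Eventually.of_forall hf0)
    (Set.iUnion₂_subset hsub).eventuallyLE

theorem disjoint_Ioc_of_le_abs_sub {a b δ : ℝ} (h : δ ≤ |a - b|) :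
    Disjoint (Set.Ioc a (a + δ)) (Set.Ioc b (b + δ)) := by
  rw [Set.Ioc_disjoint_Ioc]
  cases abs_cases (a - b) <;> cases min_cases (a + δ) (b + δ) <;>
    cases max_cases a b <;> linarith

theorem abs_sub_round_le_abs_fract_sub (a b : ℝ) :
    |a - b - round (a - b)| ≤ |Int.fract a - Int.fract b| := by
  have h := round_le (a - b) (⌊a⌋ - ⌊b⌋)
  rwa [Int.cast_sub, show a - b - (⌊a⌋ - ⌊b⌋ : ℝ) = Int.fract a - Int.fract b by
    simp only [Int.fract]; ring] at h

theorem Function.Periodic.intervalIntegral_zero_two_eq {g : ℝ → ℝ} (hg : Periodic g 1)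
    (hg_cont : Continuous g) : ∫ x in (0 : ℝ)..2, g x = 2 * ∫ x in (0 : ℝ)..1, g x := by
  have h := hg.intervalIntegral_add_zsmul_eq 2 0 fun _ _ => hg_cont.intervalIntegrable _ _
  simpa only [zero_add, zsmul_eq_mul, Int.cast_ofNat, mul_one] using h

theorem integral_two_mul_le_integral_sq_add {f g : ℝ → ℝ} (hf : Continuous f)
    (hg : Continuous g) {c : ℝ} (hc : 0 < c) {a b : ℝ} (hab : a ≤ b) :
    ∫ x in a..b, 2 * f x * g x ≤ c * (∫ x in a..b, f x ^ 2) + c⁻¹ * ∫ x in a..b, g x ^ 2 := by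
  have hamgm (x : ℝ) : 2 * f x * g x ≤ c * f x ^ 2 + c⁻¹ * g x ^ 2 := by
    have h : 0 ≤ c⁻¹ * (c * f x - g x) ^ 2 := by positivity
    have h' : c⁻¹ * (c * f x - g x) ^ 2 = c * f x ^ 2 + c⁻¹ * g x ^ 2 - 2 * f x * g x := by
      field_simp; ring
    linarith
  have hint {h : ℝ → ℝ} (hh : Continuous h) : IntervalIntegrable h volume a b :=
    hh.intervalIntegrable a b
  rw [← intervalIntegral.integral_const_mul, ← intervalIntegral.integral_const_mul,
    ← intervalIntegral.integral_add (hint (by fun_prop)) (hint (by fun_prop))]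
  exact intervalIntegral.integral_mono_on hab (hint (by fun_prop)) (hint (by fun_prop))
    fun x _ => hamgm x

section Gallagher

variable {E : Type*} [NormedAddCommGroup E] [NormedSpace ℝ E] {F F' : ℝ → E}

theorem norm_le_average_add_integral_norm_deriv [CompleteSpace E]
    (hF : ∀ x, HasDerivAt F (F' x) x) (hF' : Continuous F') (x : ℝ) {δ : ℝ} (hδ : 0 < δ) :
    ‖F x‖ ≤ δ⁻¹ * (∫ y in x..x + δ, ‖F y‖) + ∫ y in x..x + δ, ‖F' y‖ := by
  set K := ∫ y in x..x + δ, ‖F' y‖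
  have hFc : Continuous F := continuous_iff_continuousAt.2 fun y => (hF y).continuousAt
  have hnear : ∀ y ∈ Set.Icc x (x + δ), ‖F x‖ ≤ ‖F y‖ + K := fun y hy =>
    calc ‖F x‖ ≤ ‖F y‖ + ‖F y - F x‖ := norm_le_insert _ _
      _ = ‖F y‖ + ‖∫ t in x..y, F' t‖ := by
        rw [intervalIntegral.integral_eq_sub_of_hasDerivAt (fun t _ => hF t)
          (hF'.intervalIntegrable x y)]
      _ ≤ ‖F y‖ + ∫ t in x..y, ‖F' t‖ := by
        gcongr; exact intervalIntegral.norm_integral_le_integral_norm hy.1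
      _ ≤ ‖F y‖ + K := by
        gcongr
        exact intervalIntegral.integral_mono_interval le_rfl hy.1 hy.2
          (Filter.Eventually.of_forall fun _ => norm_nonneg _) (hF'.norm.intervalIntegrable _ _)
  have hint : ∫ _ in x..x + δ, ‖F x‖ ≤ ∫ y in x..x + δ, (‖F y‖ + K) :=
    intervalIntegral.integral_mono_on (by linarith) intervalIntegrable_const
    ((hFc.norm.intervalIntegrable _ _).add intervalIntegrable_const) hnear
  rw [intervalIntegral.integral_const, intervalIntegral.integral_add
    (hFc.norm.intervalIntegrable _ _) intervalIntegrable_const, intervalIntegral.integral_const,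
    add_sub_cancel_left, smul_eq_mul, smul_eq_mul] at hint
  rw [← le_div_iff₀' hδ] at hint
  calc ‖F x‖ ≤ _ := hint
    _ = _ := by field_simp

theorem periodic_of_hasDerivAt (hF : ∀ x, HasDerivAt F (F' x) x) {c : ℝ}
    (hper : Periodic F c) : Periodic F' c := fun x => by
  have h := (hF (x + c)).comp_add_const x c
  rw [show (fun y => F (y + c)) = F from funext hper] at h
  exact h.unique (hF x)

theorem sum_norm_le_of_separated [CompleteSpace E] (hF : ∀ x, HasDerivAt F (F' x) x)
    (hF' : Continuous F') (hper : Periodic F 1) {δ : ℝ} (hδ : 0 < δ) (hδ1 : δ ≤ 1)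
    {ι : Type*} (s : Finset ι) (α : ι → ℝ)
    (hsep : ∀ i ∈ s, ∀ j ∈ s, i ≠ j → δ ≤ |α i - α j - round (α i - α j)|) :
    ∑ i ∈ s, ‖F (α i)‖ ≤ 2 * (δ⁻¹ * (∫ x in (0 : ℝ)..1, ‖F x‖) + ∫ x in (0 : ℝ)..1, ‖F' x‖) := by
  have hFc : Continuous F := continuous_iff_continuousAt.2 fun y => (hF y).continuousAt
  have hF_fract (a : ℝ) : F (Int.fract a) = F a := by
    rw [Int.fract, ← mul_one (⌊a⌋ : ℝ), hper.sub_int_mul_eq]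
  have hsub : ∀ i ∈ s, Set.Ioc (Int.fract (α i)) (Int.fract (α i) + δ) ⊆ Set.Ioc 0 2 :=
    fun i _ => Set.Ioc_subset_Ioc (Int.fract_nonneg _) (by linarith [Int.fract_lt_one (α i)])
  have hdisj : Set.Pairwise s
      (Disjoint on fun i => Set.Ioc (Int.fract (α i)) (Int.fract (α i) + δ)) :=
    fun i hi j hj hij => disjoint_Ioc_of_le_abs_sub
      ((hsep i hi j hj hij).trans (abs_sub_round_le_abs_fract_sub _ _))
  calc ∑ i ∈ s, ‖F (α i)‖ = ∑ i ∈ s, ‖F (Int.fract (α i))‖ := by simp only [hF_fract]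
    _ ≤ ∑ i ∈ s, (δ⁻¹ * (∫ y in Int.fract (α i)..Int.fract (α i) + δ, ‖F y‖) +
          ∫ y in Int.fract (α i)..Int.fract (α i) + δ, ‖F' y‖) :=
        sum_le_sum fun i _ => norm_le_average_add_integral_norm_deriv hF hF' _ hδ
    _ = δ⁻¹ * ∑ i ∈ s, (∫ y in Int.fract (α i)..Int.fract (α i) + δ, ‖F y‖) +
          ∑ i ∈ s, ∫ y in Int.fract (α i)..Int.fract (α i) + δ, ‖F' y‖ := by
        rw [sum_add_distrib, mul_sum]
    _ ≤ δ⁻¹ * (∫ x in (0 : ℝ)..2, ‖F x‖) + ∫ x in (0 : ℝ)..2, ‖F' x‖ := by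
        gcongr
        · exact sum_intervalIntegral_le_of_pairwise_disjoint zero_le_two
            hFc.norm.integrableOn_Ioc (fun _ => norm_nonneg _) hδ.le s _ hsub hdisj
        · exact sum_intervalIntegral_le_of_pairwise_disjoint zero_le_two
            hF'.norm.integrableOn_Ioc (fun _ => norm_nonneg _) hδ.le s _ hsub hdisj
    _ = 2 * (δ⁻¹ * (∫ x in (0 : ℝ)..1, ‖F x‖) + ∫ x in (0 : ℝ)..1, ‖F' x‖) := by
        have hper' := periodic_of_hasDerivAt hF hper
        rw [Periodic.intervalIntegral_zero_two_eq (g := fun x => ‖F x‖) (hper.comp _) hFc.norm,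
          Periodic.intervalIntegral_zero_two_eq (g := fun x => ‖F' x‖) (hper'.comp _) hF'.norm]
        ring

end Gallagher

def expSum (S : Finset ℤ) (α : ℝ) : ℂ := ∑ m ∈ S, exp (2 * π * I * α * m)

theorem trigPoly_sub_eq_norm_sq_expSum (S : Finset ℤ) (α : ℝ) :
    trigPoly (S ×ˢ S) (fun p => p.1 - p.2) 1 α = (‖expSum S α‖ ^ 2 : ℝ) := by
  rw [ofReal_pow, ← mul_conj', expSum, map_sum, sum_mul_sum, trigPoly, sum_product]
  refine sum_congr rfl fun a _ => sum_congr rfl fun b _ => ?_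
  rw [← exp_conj, ← exp_add, Pi.one_apply, one_mul]
  simp only [map_mul, conj_ofReal, conj_I, map_intCast, map_ofNat]
  push_cast
  ring_nf

theorem card_filter_sub_eq_sub_prodAssoc {G : Type*} [AddGroup G] [DecidableEq G]
    (S : Finset G) :
    #{p ∈ (S ×ˢ S) ×ˢ (S ×ˢ S) | p.1.1 - p.1.2 = p.2.1 - p.2.2} =
      #{p ∈ S ×ˢ S ×ˢ S ×ˢ S | p.1 - p.2.1 = p.2.2.1 - p.2.2.2} :=
  card_nbij' (fun p => (p.1.1, p.1.2, p.2)) (fun p => ((p.1, p.2.1), p.2.2))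
    (fun p hp => by simp_all) (fun p hp => by simp_all) (fun _ _ => rfl) (fun _ _ => rfl)

theorem integral_norm_sq_trigPoly_sub_deriv_le {N : ℕ} {S : Finset ℤ} (hS : S ⊆ Icc 1 (N : ℤ)) :
    ∫ x in (0 : ℝ)..1,
        ‖trigPoly (S ×ˢ S) (fun p => p.1 - p.2) (fun p => 2 * π * I * (p.1 - p.2 : ℤ)) x‖ ^ 2 ≤
      (2 * π * N) ^ 2 * #{p ∈ (S ×ˢ S) ×ˢ (S ×ˢ S) | p.1.1 - p.1.2 = p.2.1 - p.2.2} := by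
  refine integral_norm_sq_trigPoly_le _ _ _ fun p hp => ?_
  have hdiff : |((p.1 - p.2 : ℤ) : ℝ)| ≤ N := by
    have h1 := hS (mem_product.1 hp).1
    have h2 := hS (mem_product.1 hp).2
    rw [mem_Icc] at h1 h2
    exact_mod_cast abs_le.2 ⟨by omega, by omega⟩
  simp only [norm_mul, norm_ofNat, norm_real, Real.norm_of_nonneg Real.pi_pos.le, norm_I,
    mul_one, norm_intCast]
  gcongr

theorem sum_norm_expSum_pow_four_le {N : ℕ} (hN : 0 < N) {S : Finset ℤ}
    (hS : S ⊆ Icc 1 (N : ℤ)) {ι : Type*} (s : Finset ι) (α : ι → ℝ)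
    (hsep : ∀ i ∈ s, ∀ j ∈ s, i ≠ j → 1 / (N : ℝ) ≤ |α i - α j - round (α i - α j)|) :
    ∑ i ∈ s, ‖expSum S (α i)‖ ^ 4 ≤ 2 * (1 + 4 * π) * N *
      #{p ∈ (S ×ˢ S) ×ˢ (S ×ˢ S) | p.1.1 - p.1.2 = p.2.1 - p.2.2} := by
  set P := trigPoly (S ×ˢ S) (fun p => p.1 - p.2) 1
  set Q := trigPoly (S ×ˢ S) (fun p => p.1 - p.2) (fun p => 2 * π * I * (p.1 - p.2 : ℤ))
  set E : ℝ := ((#{p ∈ (S ×ˢ S) ×ˢ (S ×ˢ S) | p.1.1 - p.1.2 = p.2.1 - p.2.2} : ℕ) : ℝ)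
  set c : ℝ := 2 * π * N
  have hc : 0 < c := by positivity
  have hP : ∫ x in (0 : ℝ)..1, ‖P x‖ ^ 2 ≤ E := by
    simpa using integral_norm_sq_trigPoly_le (S ×ˢ S) (fun p => p.1 - p.2) 1 (B := 1) (by simp)
  have hQ : ∫ x in (0 : ℝ)..1, ‖Q x‖ ^ 2 ≤ c ^ 2 * E := integral_norm_sq_trigPoly_sub_deriv_le hS
  have hF (x : ℝ) : HasDerivAt (fun y => P y ^ 2) (2 * P x * Q x) x := by
    refine ((hasDerivAt_trigPoly _ _ _ x).fun_pow 2).congr_deriv ?_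
    simp only [P, Q, Pi.one_apply, mul_one]
    ring
  have hP_cont : Continuous P := (differentiable_trigPoly _ _ _).continuous
  have hQ_cont : Continuous Q := (differentiable_trigPoly _ _ _).continuous
  have hsum := sum_norm_le_of_separated hF (by fun_prop)
    (fun x => by simp only [P, trigPoly_periodic _ _ _ x]) (by positivity)
    (div_le_one_of_le₀ (by exact_mod_cast hN) (Nat.cast_nonneg _)) s α hsep
  have hderiv : ∫ x in (0 : ℝ)..1, ‖2 * P x * Q x‖ ≤ 2 * c * E := by
    calc ∫ x in (0 : ℝ)..1, ‖2 * P x * Q x‖ = ∫ x in (0 : ℝ)..1, 2 * ‖P x‖ * ‖Q x‖ := by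
          simp only [norm_mul, norm_ofNat]
      _ ≤ c * (∫ x in (0 : ℝ)..1, ‖P x‖ ^ 2) + c⁻¹ * ∫ x in (0 : ℝ)..1, ‖Q x‖ ^ 2 :=
          integral_two_mul_le_integral_sq_add hP_cont.norm hQ_cont.norm hc zero_le_one
      _ ≤ c * E + c⁻¹ * (c ^ 2 * E) := by gcongr
      _ = 2 * c * E := by field_simp; ring
  calc ∑ i ∈ s, ‖expSum S (α i)‖ ^ 4 = ∑ i ∈ s, ‖P (α i) ^ 2‖ := by
        refine sum_congr rfl fun i _ => ?_
        rw [norm_pow, show P (α i) = _ from trigPoly_sub_eq_norm_sq_expSum S (α i), norm_real,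
          Real.norm_of_nonneg (sq_nonneg _), ← pow_mul]
    _ ≤ _ := hsum
    _ ≤ 2 * (N * E + 2 * c * E) := by
        simp only [norm_pow, one_div, inv_inv]
        gcongr
    _ = 2 * (1 + 4 * π) * N * E := by unfold c; ring

end

theorem large_spectrum_bound :
    ∃ C : ℝ, 0 < C ∧ ∀ (N : ℕ), 1 ≤ N → ∀ S : Finset ℤ, S.Nonempty →
      S ⊆ Finset.Icc 1 (N : ℤ) → ∀ ε η : ℝ, 0 < ε → η ≤ 1 →
      ((((S ×ˢ S ×ˢ S ×ˢ S).filter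
          (fun p => p.1 - p.2.1 = p.2.2.1 - p.2.2.2)).card : ℝ)) ≤ (2 + η) * S.card ^ 2 →
      ∀ (R : ℕ) (α : Fin R → ℝ),
        (∀ i j, i ≠ j → 1 / (N : ℝ) ≤ |(α i - α j) - round (α i - α j)|) →
        (∀ i, ε * S.card ≤
          ‖∑ m ∈ S, Complex.exp (2 * Real.pi * Complex.I * (α i) * m)‖) →
        (R : ℝ) ≤ C * N / (ε ^ 4 * S.card ^ 2) ∧
        ∀ δ : ℝ, 0 < δ → δ * Real.sqrt N ≤ S.card → (R : ℝ) ≤ C / (δ ^ 2 * ε ^ 4) := by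
  refine ⟨6 * (1 + 4 * π), by positivity, ?_⟩
  intro N hN S hS_ne hS ε η hε hη hE R α hsep hlarge
  have hmoment := sum_norm_expSum_pow_four_le hN hS univ α fun i _ j _ => hsep i j
  rw [card_filter_sub_eq_sub_prodAssoc] at hmoment
  have hcount : R * (ε * #S) ^ 4 ≤ ∑ i, ‖expSum S (α i)‖ ^ 4 := by
    simpa using card_nsmul_le_sum univ (fun i => ‖expSum S (α i)‖ ^ 4) _
      fun i _ => pow_le_pow_left₀ (by positivity) (hlarge i) 4
  have hR : R * ε ^ 4 * #S ^ 2 ≤ 6 * (1 + 4 * π) * N := by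
    refine le_of_mul_le_mul_right ?_ (by positivity : (0 : ℝ) < #S ^ 2)
    calc R * ε ^ 4 * #S ^ 2 * #S ^ 2 = R * (ε * #S) ^ 4 := by ring
      _ ≤ 2 * (1 + 4 * π) * N * ((2 + η) * #S ^ 2) := by
        refine hcount.trans (hmoment.trans ?_)
        gcongr
      _ ≤ 6 * (1 + 4 * π) * N * #S ^ 2 := by
        have : 0 ≤ 2 * (1 + 4 * π) * N * #S ^ 2 := by positivity
        nlinarith
  refine ⟨by rw [le_div_iff₀ (by positivity)]; linarith, fun δ hδ hδS => ?_⟩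
  have hδN : δ ^ 2 * N ≤ #S ^ 2 := by
    simpa [mul_pow, Real.sq_sqrt (Nat.cast_nonneg N)] using pow_le_pow_left₀ (by positivity) hδS 2
  rw [le_div_iff₀ (by positivity)]
  refine le_of_mul_le_mul_right ?_ (by positivity : (0 : ℝ) < #S ^ 2)
  calc R * (δ ^ 2 * ε ^ 4) * #S ^ 2 = (R * ε ^ 4 * #S ^ 2) * δ ^ 2 := by ring
    _ ≤ 6 * (1 + 4 * π) * N * δ ^ 2 := by gcongr
    _ ≤ 6 * (1 + 4 * π) * #S ^ 2 := by rw [mul_assoc, mul_comm (N : ℝ)]; gcongr
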